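/- arXiv:1905.05052 — 2 statements merged into one kernel-verified Lean document; each statement's English description precedes it below -/
import Mathlib

section
/- Let x₁, x₂, x₃ ∈ ℝ² be the vertices of a triangle with 2A := det(x₂−x₁, x₃−x₁) ≠ 0, and let J : ℝ² → ℝ² be the rotation J(v₁,v₂) = (v₂,−v₁). Set ν₂ := J(x₁−x₃) and ν₃ := J(x₂−x₁) (for a counterclockwise-oriented triangle these are the outward normals to the edges opposite x₂ and x₃, scaled by the corresponding edge lengths). Then for every affine function f : ℝ² → ℝ, f(p) = ⟨g, p⟩ + c with g ∈ ℝ² and c ∈ ℝ, one has g = −(1/(2A))·[(f(x₂)−f(x₁))·ν₂ + (f(x₃)−f(x₁))·ν₃]. -/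
/-! The rotation `J` turns the columns of `(u v)` into the rows of its adjugate, so
`det(u,v) • g = ⟨g,u⟩ • J v − ⟨g,v⟩ • J u` (Cramer's rule); with `u = x₂ − x₁`, `v = x₃ − x₁`
the coefficients are the differences of `f` along the edges. -/

/-- The 2×2 determinant of the matrix with columns `u`, `v`. -/
def det2 (u v : ℝ × ℝ) : ℝ := u.1 * v.2 - u.2 * v.1

/-- The rotation `J(v₁,v₂) = (v₂,−v₁)`. -/
def rotJ (v : ℝ × ℝ) : ℝ × ℝ := (v.2, -v.1)

lemma rotJ_neg (v : ℝ × ℝ) : rotJ (-v) = -rotJ v := rfl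

lemma det2_smul_eq (u v g : ℝ × ℝ) :
    det2 u v • g = (g.1 * u.1 + g.2 * u.2) • rotJ v - (g.1 * v.1 + g.2 * v.2) • rotJ u := by
  ext <;> simp only [det2, rotJ, Prod.smul_fst, Prod.smul_snd, Prod.fst_sub, Prod.snd_sub,
    smul_eq_mul] <;> ring

lemma sub_eq_of_affine {f : ℝ × ℝ → ℝ} {g : ℝ × ℝ} {c : ℝ}
    (hf : ∀ p : ℝ × ℝ, f p = g.1 * p.1 + g.2 * p.2 + c) (p q : ℝ × ℝ) :
    f p - f q = g.1 * (p - q).1 + g.2 * (p - q).2 := by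
  simp only [hf, Prod.fst_sub, Prod.snd_sub]
  ring

/-- MPFA gradient reconstruction formula: for a triangle `x₁x₂x₃` with
`2A = det(x₂−x₁, x₃−x₁) ≠ 0`, normals `ν₂ = J(x₁−x₃)`, `ν₃ = J(x₂−x₁)`, and an
affine function `f(p) = ⟨g,p⟩ + c`, one has
`g = −(1/(2A))·[(f(x₂)−f(x₁))·ν₂ + (f(x₃)−f(x₁))·ν₃]`. -/
theorem stmt5 (x₁ x₂ x₃ : ℝ × ℝ) (A : ℝ)
    (hA : 2 * A = det2 (x₂ - x₁) (x₃ - x₁)) (hA0 : 2 * A ≠ 0)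
    (f : ℝ × ℝ → ℝ) (g : ℝ × ℝ) (c : ℝ)
    (hf : ∀ p : ℝ × ℝ, f p = g.1 * p.1 + g.2 * p.2 + c) :
    g = (-(1 / (2 * A))) •
        ((f x₂ - f x₁) • rotJ (x₁ - x₃) + (f x₃ - f x₁) • rotJ (x₂ - x₁)) := by
  have hcramer := det2_smul_eq (x₂ - x₁) (x₃ - x₁) g
  rw [← hA, ← sub_eq_of_affine hf, ← sub_eq_of_affine hf] at hcramer
  rw [← neg_sub x₃ x₁, rotJ_neg, one_div, neg_smul, ← smul_neg, eq_inv_smul_iff₀ hA0, hcramer]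
  module
end

section
/- Let h₁, h₂ > 0, set a = −h₁/(h₂(h₁+h₂)), b = (h₁+h₂)/(h₁h₂), c = (h₁² − (h₁+h₂)²)/(h₁h₂(h₁+h₂)), and let f : ℝ → ℝ be three times differentiable on [x, x+h₁+h₂] with |f'''(t)| ≤ M₃ for all t in that interval. Then |a·f(x+h₁+h₂) + b·f(x+h₁) + c·f(x) − f'(x)| ≤ (M₃/6)·h₁(h₁+h₂)(2h₁+h₂)/h₂. In particular, if h₁, h₂ ≤ h and h₂ ≥ κh for a fixed κ > 0, the approximation error is O(h²). -/
/-!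
Expanding both stencil values to second order about `x`, the weights make the stencil exact on
quadratics, so the error is `a E₂ + b E₁` with `E₁`, `E₂` the Lagrange remainders at steps `h₁`
and `h₁ + h₂`, bounded by `M₃ h₁³ / 6` and `M₃ (h₁ + h₂)³ / 6`. Weighting them by `|b|` and `|a|`
gives `M₃ h₁ (h₁ + h₂) (2h₁ + h₂) / (6 h₂)`, which is `O(h²)` once `h₂` is comparable to `h`.
-/

open Set

section Taylor

variable {f f' f'' f''' : ℝ → ℝ} {s : Set ℝ} {a b : ℝ}

lemma iteratedDerivWithin_succ_eqOn {n : ℕ} {g g' : ℝ → ℝ} (hs : UniqueDiffOn ℝ s)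
    (hg : EqOn (iteratedDerivWithin n f s) g s) (hg' : ∀ t ∈ s, HasDerivWithinAt g (g' t) s t) :
    EqOn (iteratedDerivWithin (n + 1) f s) g' s := by
  intro t ht
  rw [iteratedDerivWithin_succ, derivWithin_congr hg (hg ht)]
  exact (hg' t ht).derivWithin (hs t ht)

lemma exists_taylor_two_lagrange (hab : a < b)
    (hf : ∀ t ∈ Icc a b, HasDerivWithinAt f (f' t) (Icc a b) t)
    (hf' : ∀ t ∈ Icc a b, HasDerivWithinAt f' (f'' t) (Icc a b) t)
    (hf'' : ∀ t ∈ Icc a b, HasDerivWithinAt f'' (f''' t) (Icc a b) t) :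
    ∃ ξ ∈ Ioo a b,
      f b - (f a + f' a * (b - a) + f'' a * (b - a) ^ 2 / 2) = f''' ξ * (b - a) ^ 3 / 6 := by
  have hs : UniqueDiffOn ℝ (Icc a b) := uniqueDiffOn_Icc hab
  have d₀ : EqOn (iteratedDerivWithin 0 f (Icc a b)) f (Icc a b) := by
    rw [iteratedDerivWithin_zero]; exact eqOn_refl _ _
  have d₁ := iteratedDerivWithin_succ_eqOn hs d₀ hf
  have d₂ := iteratedDerivWithin_succ_eqOn hs d₁ hf'
  have d₃ := iteratedDerivWithin_succ_eqOn hs d₂ hf''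
  have diff₂ : DifferentiableOn ℝ (iteratedDerivWithin 2 f (Icc a b)) (Icc a b) :=
    fun t ht ↦ (hf'' t ht).differentiableWithinAt.congr d₂ (d₂ ht)
  have hcont : ContDiffOn ℝ 2 f (Icc a b) := by
    refine contDiffOn_of_differentiableOn_deriv fun m hm ↦ ?_
    have hm' : m ≤ 2 := mod_cast hm
    interval_cases m
    · exact fun t ht ↦ (hf t ht).differentiableWithinAt.congr d₀ (d₀ ht)
    · exact fun t ht ↦ (hf' t ht).differentiableWithinAt.congr d₁ (d₁ ht)
    · exact diff₂
  rw [← uIcc_of_le hab.le] at hcont diff₂ d₁ d₂ d₃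
  obtain ⟨ξ, hξ, h⟩ := taylor_mean_remainder_lagrange hab.ne hcont
    (diff₂.mono uIoo_subset_uIcc_self)
  refine ⟨ξ, uIoo_of_le hab.le ▸ hξ, ?_⟩
  have ha : a ∈ uIcc a b := left_mem_uIcc
  rw [taylor_within_apply] at h
  simp [Finset.sum_range_succ, d₁ ha, d₂ ha, d₃ (uIoo_subset_uIcc_self hξ),
    Nat.factorial] at h
  linear_combination h

lemma abs_sub_taylor_two_le {x M : ℝ} (hx : x ∈ Icc a b)
    (hf : ∀ t ∈ Icc a b, HasDerivWithinAt f (f' t) (Icc a b) t)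
    (hf' : ∀ t ∈ Icc a b, HasDerivWithinAt f' (f'' t) (Icc a b) t)
    (hf'' : ∀ t ∈ Icc a b, HasDerivWithinAt f'' (f''' t) (Icc a b) t)
    (hM : ∀ t ∈ Icc a b, |f''' t| ≤ M) :
    |f x - (f a + f' a * (x - a) + f'' a * (x - a) ^ 2 / 2)| ≤ M * (x - a) ^ 3 / 6 := by
  rcases hx.1.eq_or_lt with rfl | hax
  · simp
  have hsub : Icc a x ⊆ Icc a b := Icc_subset_Icc_right hx.2
  obtain ⟨ξ, hξ, h⟩ := exists_taylor_two_lagrange hax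
    (fun t ht ↦ (hf t (hsub ht)).mono hsub) (fun t ht ↦ (hf' t (hsub ht)).mono hsub)
    (fun t ht ↦ (hf'' t (hsub ht)).mono hsub)
  rw [h, abs_div, abs_mul, abs_of_nonneg (pow_nonneg (sub_nonneg.2 hax.le) 3),
    abs_of_pos (by norm_num : (0 : ℝ) < 6)]
  gcongr
  exact hM ξ (hsub (Ioo_subset_Icc_self hξ))

end Taylor

lemma upwind_stencil_sub_eq {h₁ h₂ a b c : ℝ} (h₁pos : 0 < h₁) (h₂pos : 0 < h₂)
    (ha : a = -h₁ / (h₂ * (h₁ + h₂))) (hb : b = (h₁ + h₂) / (h₁ * h₂))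
    (hc : c = (h₁ ^ 2 - (h₁ + h₂) ^ 2) / (h₁ * h₂ * (h₁ + h₂))) (y₀ y₁ y₂ d₁ d₂ : ℝ) :
    a * y₂ + b * y₁ + c * y₀ - d₁ =
      a * (y₂ - (y₀ + d₁ * (h₁ + h₂) + d₂ * (h₁ + h₂) ^ 2 / 2)) +
        b * (y₁ - (y₀ + d₁ * h₁ + d₂ * h₁ ^ 2 / 2)) := by
  subst ha hb hc
  field_simp
  ring

lemma upwind_abs_weights_mul_remainder_bounds {h₁ h₂ a b : ℝ} (h₁pos : 0 < h₁) (h₂pos : 0 < h₂)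
    (ha : a = -h₁ / (h₂ * (h₁ + h₂))) (hb : b = (h₁ + h₂) / (h₁ * h₂)) (M : ℝ) :
    |a| * (M * (h₁ + h₂) ^ 3 / 6) + |b| * (M * h₁ ^ 3 / 6) =
      M / 6 * h₁ * (h₁ + h₂) * (2 * h₁ + h₂) / h₂ := by
  rw [ha, hb, abs_div, abs_neg, abs_of_pos h₁pos, abs_of_pos (by positivity),
    abs_of_pos (by positivity)]
  field_simp
  ring

lemma upwind_error_bound_le_sq {h₁ h₂ h κ M : ℝ} (h₁pos : 0 < h₁) (hM : 0 ≤ M) (hκ : 0 < κ)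
    (hh₁ : h₁ ≤ h) (hh₂ : h₂ ≤ h) (hκh : κ * h ≤ h₂) :
    M / 6 * h₁ * (h₁ + h₂) * (2 * h₁ + h₂) / h₂ ≤ M / κ * h ^ 2 := by
  have hpos : 0 < h := h₁pos.trans_le hh₁
  have h₂pos : 0 < h₂ := (mul_pos hκ hpos).trans_le hκh
  have hcube : h₁ * (h₁ + h₂) * (2 * h₁ + h₂) ≤ 6 * h ^ 3 :=
    calc h₁ * (h₁ + h₂) * (2 * h₁ + h₂) ≤ h * (h + h) * (2 * h + h) := by gcongr
      _ = 6 * h ^ 3 := by ring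
  rw [div_le_iff₀ h₂pos]
  calc M / 6 * h₁ * (h₁ + h₂) * (2 * h₁ + h₂)
        = M / 6 * (h₁ * (h₁ + h₂) * (2 * h₁ + h₂)) := by ring
    _ ≤ M / 6 * (6 * h ^ 3) := by gcongr
    _ = M / κ * h ^ 2 * (κ * h) := by field_simp
    _ ≤ M / κ * h ^ 2 * h₂ := by gcongr

/-- Error bound for the second-order one-sided difference approximation of `f'(x)`
on the non-uniform stencil `{x, x+h₁, x+h₁+h₂}`: if `f` is three times
differentiable on `[x, x+h₁+h₂]` with `|f'''| ≤ M₃` there, then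
`|a·f(x+h₁+h₂) + b·f(x+h₁) + c·f(x) − f'(x)| ≤ (M₃/6)·h₁(h₁+h₂)(2h₁+h₂)/h₂`.
In particular the error is `O(h²)` when `h₁,h₂ ≤ h` and `h₂ ≥ κh` with `κ > 0`. -/
theorem stmt8 (h₁ h₂ : ℝ) (h₁pos : 0 < h₁) (h₂pos : 0 < h₂)
    (a b c : ℝ)
    (ha : a = -h₁ / (h₂ * (h₁ + h₂)))
    (hb : b = (h₁ + h₂) / (h₁ * h₂))
    (hc : c = (h₁^2 - (h₁ + h₂)^2) / (h₁ * h₂ * (h₁ + h₂)))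
    (x M₃ : ℝ) (f f' f'' f''' : ℝ → ℝ)
    (hf : ∀ t ∈ Set.Icc x (x + h₁ + h₂),
      HasDerivWithinAt f (f' t) (Set.Icc x (x + h₁ + h₂)) t)
    (hf' : ∀ t ∈ Set.Icc x (x + h₁ + h₂),
      HasDerivWithinAt f' (f'' t) (Set.Icc x (x + h₁ + h₂)) t)
    (hf'' : ∀ t ∈ Set.Icc x (x + h₁ + h₂),
      HasDerivWithinAt f'' (f''' t) (Set.Icc x (x + h₁ + h₂)) t)
    (hM₃ : ∀ t ∈ Set.Icc x (x + h₁ + h₂), |f''' t| ≤ M₃) :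
    |a * f (x + h₁ + h₂) + b * f (x + h₁) + c * f x - f' x|
      ≤ (M₃ / 6) * h₁ * (h₁ + h₂) * (2 * h₁ + h₂) / h₂ ∧
    ∀ h κ : ℝ, 0 < κ → h₁ ≤ h → h₂ ≤ h → κ * h ≤ h₂ →
      |a * f (x + h₁ + h₂) + b * f (x + h₁) + c * f x - f' x|
        ≤ (M₃ / κ) * h^2 := by
  have hx : x ∈ Icc x (x + h₁ + h₂) := left_mem_Icc.2 (by linarith)
  have hM : 0 ≤ M₃ := (abs_nonneg _).trans (hM₃ x hx)
  have E₁ := abs_sub_taylor_two_le (x := x + h₁) ⟨by linarith, by linarith⟩ hf hf' hf'' hM₃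
  have E₂ := abs_sub_taylor_two_le (right_mem_Icc.2 hx.2) hf hf' hf'' hM₃
  simp only [add_sub_cancel_left, add_assoc x] at E₁ E₂
  have main : |a * f (x + h₁ + h₂) + b * f (x + h₁) + c * f x - f' x|
      ≤ (M₃ / 6) * h₁ * (h₁ + h₂) * (2 * h₁ + h₂) / h₂ := by
    rw [upwind_stencil_sub_eq h₁pos h₂pos ha hb hc _ _ _ _ (f'' x), add_assoc x,
      ← upwind_abs_weights_mul_remainder_bounds h₁pos h₂pos ha hb]
    refine (abs_add_le _ _).trans ?_
    rw [abs_mul, abs_mul]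
    gcongr
  exact ⟨main, fun h κ hκ hh₁ hh₂ hκh ↦
    main.trans (upwind_error_bound_le_sq h₁pos hM hκ hh₁ hh₂ hκh)⟩
end
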